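/- arXiv:2501.15036 — 4 statements merged into one kernel-verified Lean document; each statement's English description precedes it below -/
import Mathlib

section
/- If a continuously differentiable function E on R^d is bounded below, has L-Lipschitz continuous gradient, and the iterates x_{n+1} = x_n - α_n ∇E(x_n) are generated with step sizes α_n satisfying the Wolfe conditions E(x_n + α_n p_n) ≤ E(x_n) + c₁ α_n ⟨p_n, ∇E(x_n)⟩ and ⟨p_n, ∇E(x_n + α_n p_n)⟩ ≥ c₂ ⟨p_n, ∇E(x_n)⟩ with p_n = -∇E(x_n) and 0 < c₁ < c₂ < 1, then the series ∑_{n=0}^∞ ‖∇E(x_n)‖² converges (in particular lim inf ‖∇E(x_n)‖ = 0). -/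
open RealInnerProductSpace

theorem stmt0 (d : ℕ) (E : EuclideanSpace ℝ (Fin d) → ℝ)
    (L c₁ c₂ : ℝ) (hL : 0 < L) (hc₁ : 0 < c₁) (hc₁₂ : c₁ < c₂) (hc₂ : c₂ < 1)
    (hE : ContDiff ℝ 1 E)
    (hbdd : BddBelow (Set.range E))
    (hlip : ∀ x y, ‖gradient E x - gradient E y‖ ≤ L * ‖x - y‖)
    (x : ℕ → EuclideanSpace ℝ (Fin d)) (α : ℕ → ℝ)
    (hα : ∀ n, 0 < α n)
    (hiter : ∀ n, x (n + 1) = x n - α n • gradient E (x n))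
    (hwolfe1 : ∀ n, E (x n + α n • (-(gradient E (x n)))) ≤
      E (x n) + c₁ * α n * ⟪-(gradient E (x n)), gradient E (x n)⟫)
    (hwolfe2 : ∀ n, ⟪-(gradient E (x n)), gradient E (x n + α n • (-(gradient E (x n))))⟫ ≥
      c₂ * ⟪-(gradient E (x n)), gradient E (x n)⟫) :
    Summable (fun n => ‖gradient E (x n)‖ ^ 2) := by
  set g : ℕ → EuclideanSpace ℝ (Fin d) := fun n => gradient E (x n) with hg
  set c : ℝ := c₁ * (1 - c₂) / L with hc
  have hc0 : 0 < c := by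
    apply div_pos (mul_pos hc₁ (by linarith)) hL
  have hiter' : ∀ n, x (n + 1) = x n + α n • (-(g n)) := by
    intro n; rw [hiter n]; module
  -- key step inequality
  have key : ∀ n, c * ‖g n‖ ^ 2 ≤ E (x n) - E (x (n + 1)) := by
    intro n
    have hw1 := hwolfe1 n
    rw [← hiter' n] at hw1
    have hinner : ⟪-(g n), g n⟫ = -‖g n‖ ^ 2 := by
      rw [inner_neg_left, real_inner_self_eq_norm_sq]
    rw [hinner] at hw1
    by_cases hgz : g n = 0
    · rw [hgz] at hw1 ⊢
      simp only [norm_zero] at hw1 ⊢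
      nlinarith [hw1, hα n]
    · -- α n ≥ (1 - c₂) / L
      have hw2 := hwolfe2 n
      rw [← hiter' n, hinner] at hw2
      have hcs : ⟪g n, g n - g (n + 1)⟫ ≤ ‖g n‖ * ‖g n - g (n + 1)‖ :=
        real_inner_le_norm _ _
      have hlow : (1 - c₂) * ‖g n‖ ^ 2 ≤ ⟪g n, g n - g (n + 1)⟫ := by
        rw [inner_sub_right, real_inner_self_eq_norm_sq]
        rw [inner_neg_left] at hw2
        linarith
      have hnd : ‖g n - g (n + 1)‖ ≤ L * (α n * ‖g n‖) := by
        have := hlip (x n) (x (n + 1))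
        have hx : x n - x (n + 1) = α n • g n := by rw [hiter n]; module
        calc ‖g n - g (n + 1)‖ ≤ L * ‖x n - x (n + 1)‖ := this
          _ = L * (α n * ‖g n‖) := by
              rw [hx, norm_smul, Real.norm_eq_abs, abs_of_pos (hα n)]
      have hgpos : 0 < ‖g n‖ := norm_pos_iff.mpr hgz
      have halpha : (1 - c₂) / L ≤ α n := by
        have h1 : (1 - c₂) * ‖g n‖ ^ 2 ≤ L * α n * ‖g n‖ ^ 2 := by
          calc (1 - c₂) * ‖g n‖ ^ 2 ≤ ⟪g n, g n - g (n + 1)⟫ := hlow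
            _ ≤ ‖g n‖ * (L * (α n * ‖g n‖)) :=
                le_trans hcs (by nlinarith)
            _ = L * α n * ‖g n‖ ^ 2 := by ring
        have h2 : (1 - c₂) ≤ L * α n := le_of_mul_le_mul_right h1 (pow_pos hgpos 2)
        rw [div_le_iff₀ hL]
        linarith
      have : c * ‖g n‖ ^ 2 ≤ c₁ * α n * ‖g n‖ ^ 2 := by
        have hce : c = c₁ * ((1 - c₂) / L) := by rw [hc]; ring
        rw [hce]
        exact mul_le_mul_of_nonneg_right (mul_le_mul_of_nonneg_left halpha hc₁.le)
          (sq_nonneg _)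
      linarith [hw1]
  -- lower bound
  obtain ⟨B, hB⟩ := hbdd
  have hBle : ∀ y, B ≤ E y := fun y => hB (Set.mem_range_self y)
  have hsum : Summable (fun n => c * ‖g n‖ ^ 2) := by
    apply summable_of_sum_range_le (c := E (x 0) - B)
    · intro n; positivity
    · intro n
      calc ∑ i ∈ Finset.range n, c * ‖g i‖ ^ 2
          ≤ ∑ i ∈ Finset.range n, (E (x i) - E (x (i + 1))) :=
            Finset.sum_le_sum fun i _ => key i
        _ = E (x 0) - E (x n) := Finset.sum_range_sub' (fun i => E (x i)) n
        _ ≤ E (x 0) - B := by linarith [hBle (x n)]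
  have := hsum.mul_left c⁻¹
  have heq : (fun n => c⁻¹ * (c * ‖g n‖ ^ 2)) = fun n => ‖g n‖ ^ 2 := by
    funext n; field_simp
  rwa [heq] at this
end

section
/- For the nonlinear conjugate gradient iteration p_{n+1} = -∇E(x_{n+1}) + β_n p_n with |β_n| ≤ ‖∇E(x_{n+1})‖²/‖∇E(x_n)‖², if p_n satisfies -1/(1-c₂) ≤ ⟨p_n, ∇E(x_n)⟩/‖∇E(x_n)‖² ≤ (2c₂-1)/(1-c₂) and α_n satisfies the strong Wolfe curvature condition |⟨p_n, ∇E(x_{n+1})⟩| ≤ -c₂⟨p_n, ∇E(x_n)⟩ with 0 < c₂ < 1/2, then p_{n+1} satisfies the same two-sided bound: -1/(1-c₂) ≤ ⟨p_{n+1}, ∇E(x_{n+1})⟩/‖∇E(x_{n+1})‖² ≤ (2c₂-1)/(1-c₂). In particular p_{n+1} is a descent direction. -/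
set_option maxHeartbeats 1000000


open RealInnerProductSpace

theorem stmt3 (d : ℕ) (E : EuclideanSpace ℝ (Fin d) → ℝ)
    (c₂ α β : ℝ) (x p : EuclideanSpace ℝ (Fin d))
    (hc0 : 0 < c₂) (hc1 : c₂ < 1 / 2)
    (hE : ContDiff ℝ 1 E)
    (hg : gradient E x ≠ 0) (hg' : gradient E (x + α • p) ≠ 0)
    (hβ : |β| ≤ ‖gradient E (x + α • p)‖ ^ 2 / ‖gradient E x‖ ^ 2)
    (hlow : -1 / (1 - c₂) ≤ ⟪p, gradient E x⟫ / ‖gradient E x‖ ^ 2)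
    (hup : ⟪p, gradient E x⟫ / ‖gradient E x‖ ^ 2 ≤ (2 * c₂ - 1) / (1 - c₂))
    (hsw : |⟪p, gradient E (x + α • p)⟫| ≤ -c₂ * ⟪p, gradient E x⟫) :
    (-1 / (1 - c₂) ≤
        ⟪-(gradient E (x + α • p)) + β • p, gradient E (x + α • p)⟫ /
          ‖gradient E (x + α • p)‖ ^ 2 ∧
      ⟪-(gradient E (x + α • p)) + β • p, gradient E (x + α • p)⟫ /
          ‖gradient E (x + α • p)‖ ^ 2 ≤ (2 * c₂ - 1) / (1 - c₂)) ∧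
      ⟪-(gradient E (x + α • p)) + β • p, gradient E (x + α • p)⟫ < 0 := by
  set g := gradient E x with hgdef
  set g' := gradient E (x + α • p) with hg'def
  have hG : (0:ℝ) < ‖g‖ ^ 2 := pow_pos (norm_pos_iff.mpr hg) 2
  have hG' : (0:ℝ) < ‖g'‖ ^ 2 := pow_pos (norm_pos_iff.mpr hg') 2
  set G := ‖g‖ ^ 2
  set G' := ‖g'‖ ^ 2
  have hc : (0:ℝ) < 1 - c₂ := by linarith
  have hinner : ⟪-g' + β • p, g'⟫ = -G' + β * ⟪p, g'⟫ := by
    rw [inner_add_left, inner_neg_left, real_inner_smul_left,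
      real_inner_self_eq_norm_sq]
  set s := ⟪p, g'⟫ with hsdef
  set t := ⟪p, g⟫ with htdef
  rw [div_le_div_iff₀ hc hG] at hlow
  rw [div_le_div_iff₀ hG hc] at hup
  rw [le_div_iff₀ hG] at hβ
  -- hlow : -1 * G ≤ t * (1 - c₂); hup : t * (1 - c₂) ≤ (2*c₂-1) * G
  have ht0 : 0 ≤ -c₂ * t := le_trans (abs_nonneg s) hsw
  have habs : |β * s| * G ≤ G' * (-c₂ * t) := by
    rw [abs_mul]
    nlinarith [abs_nonneg β, abs_nonneg s, mul_le_mul hβ hsw (abs_nonneg s) hG'.le]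
  have hbs1 : β * s * G ≤ G' * (-c₂ * t) :=
    le_trans (by nlinarith [le_abs_self (β * s)]) habs
  have hbs2 : -(G' * (-c₂ * t)) ≤ β * s * G := by
    nlinarith [neg_abs_le (β * s)]
  -- (1-c₂) * (-c₂ * t) * G' ≤ c₂ * G' * G  since (1-c₂)*(-t) ≤ G
  have hu : (1 - c₂) * (-c₂ * t) ≤ c₂ * G := by nlinarith [hlow, hc0.le]
  have hb : G' * ((1 - c₂) * (-c₂ * t)) ≤ G' * (c₂ * G) :=
    mul_le_mul_of_nonneg_left hu hG'.le
  have hbs1' : (1 - c₂) * (β * s * G) ≤ (1 - c₂) * (G' * (-c₂ * t)) :=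
    mul_le_mul_of_nonneg_left hbs1 hc.le
  have hbs2' : (1 - c₂) * (-(G' * (-c₂ * t))) ≤ (1 - c₂) * (β * s * G) :=
    mul_le_mul_of_nonneg_left hbs2 hc.le
  have key1G : -c₂ * (G' * G) ≤ (1 - c₂) * (β * s) * G := by linarith [hbs2', hb]
  have key2G : (1 - c₂) * (β * s) * G ≤ c₂ * (G' * G) := by linarith [hbs1', hb]
  have key1 : -c₂ * G' ≤ (1 - c₂) * (β * s) := by nlinarith [key1G, hG]
  have key2 : (1 - c₂) * (β * s) ≤ c₂ * G' := by nlinarith [key2G, hG]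
  have hneg : -G' + β * s < 0 := by nlinarith [key2, hG', hc]
  rw [hinner]
  refine ⟨⟨?_, ?_⟩, hneg⟩
  · rw [div_le_div_iff₀ hc hG']; nlinarith [key1]
  · rw [div_le_div_iff₀ hG' hc]; nlinarith [key2]
end

section
/- Suppose E is C¹ and bounded below, and along iterates one has E(x_{n+1}) ≤ E(x_n) - C ‖∇E(x_n)‖⁴/‖p_n‖² with C > 0 and ‖p_n‖² ≤ C' (n+1). Then lim inf_{n→∞} ‖∇E(x_n)‖ = 0. -/
/-!
Telescoping the descent inequality against the lower bound of `E` makes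
`∑ C ‖∇E(xₙ)‖⁴ / ‖pₙ‖²` finite; with `‖pₙ‖² ≤ C' (n + 1)` this gives `∑ ‖∇E(xₙ)‖⁴ / (n + 1) < ∞`.
If the gradients stayed above some `ε > 0`, this series would dominate a multiple of the
harmonic series.
-/

open Filter Set

theorem summable_of_le_sub_of_bddBelow {f a : ℕ → ℝ} (hf : BddBelow (range f))
    (ha : ∀ n, 0 ≤ a n) (h : ∀ n, f (n + 1) ≤ f n - a n) : Summable a := by
  obtain ⟨m, hm⟩ := hf
  have telescope : ∀ n, ∑ k ∈ Finset.range n, a k ≤ f 0 - f n := by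
    intro n
    induction n with
    | zero => simp
    | succ n ih => linarith [Finset.sum_range_succ a n, h n]
  exact summable_of_sum_range_le (c := f 0 - m) ha fun n => by linarith [telescope n, hm ⟨n, rfl⟩]

theorem not_summable_one_div_natCast_add_one : ¬Summable fun n : ℕ => 1 / ((n : ℝ) + 1) := by
  exact_mod_cast mt (summable_nat_add_iff 1).1 Real.not_summable_one_div_natCast

theorem frequently_lt_of_summable_div_natCast_add_one {u : ℕ → ℝ}
    (hu : Summable fun n : ℕ => u n / (n + 1)) {ε : ℝ} (hε : 0 < ε) :
    ∃ᶠ n in atTop, u n < ε := by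
  by_contra h
  have hlarge : ∀ᶠ n in atTop, ε ≤ u n := by simpa using h
  have : Summable fun n : ℕ => ε / ((n : ℝ) + 1) :=
    hu.of_norm_bounded_eventually_nat <| hlarge.mono fun n hn => by
      rw [Real.norm_of_nonneg (by positivity)]
      gcongr
  refine not_summable_one_div_natCast_add_one ((this.mul_left ε⁻¹).congr fun n => ?_)
  field_simp

theorem liminf_eq_zero_of_frequently_lt {u : ℕ → ℝ} (hu : ∀ n, 0 ≤ u n)
    (h : ∀ ε > 0, ∃ᶠ n in atTop, u n < ε) : liminf u atTop = 0 := by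
  have hbdd : IsBoundedUnder (· ≥ ·) atTop u := isBoundedUnder_of_eventually_ge (.of_forall hu)
  refine le_antisymm (le_of_forall_pos_le_add fun ε hε => ?_) ?_
  · simpa using liminf_le_of_frequently_le ((h ε hε).mono fun n hn => hn.le) hbdd
  · exact le_liminf_of_le (.of_frequently_le ((h 1 one_pos).mono fun n hn => hn.le))
      (.of_forall hu)

theorem stmt7_general (d : ℕ) (E : EuclideanSpace ℝ (Fin d) → ℝ)
    (C C' : ℝ) (hC : 0 < C) (hC' : 0 < C')
    (hbdd : BddBelow (Set.range E))
    (x p : ℕ → EuclideanSpace ℝ (Fin d))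
    (hp : ∀ n, p n ≠ 0)
    (hdec : ∀ n, E (x (n + 1)) ≤ E (x n) - C * ‖gradient E (x n)‖ ^ 4 / ‖p n‖ ^ 2)
    (hpbound : ∀ n, ‖p n‖ ^ 2 ≤ C' * (n + 1)) :
    Filter.liminf (fun n => ‖gradient E (x n)‖) Filter.atTop = 0 := by
  set g : ℕ → ℝ := fun n => ‖gradient E (x n)‖
  have hp_sq_pos : ∀ n, 0 < ‖p n‖ ^ 2 := fun n => pow_pos (norm_pos_iff.2 (hp n)) 2
  have hdescent : Summable fun n => C * g n ^ 4 / ‖p n‖ ^ 2 :=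
    summable_of_le_sub_of_bddBelow (hbdd.mono (range_comp_subset_range x E))
      (fun n => by positivity) hdec
  have hweighted : Summable fun n : ℕ => g n ^ 4 / (n + 1) := by
    refine (hdescent.mul_left (C' / C)).of_nonneg_of_le (fun n => by positivity) fun n => ?_
    calc g n ^ 4 / (n + 1) = C' * g n ^ 4 / (C' * (n + 1)) := by field_simp
      _ ≤ C' * g n ^ 4 / ‖p n‖ ^ 2 := by gcongr; exacts [hp_sq_pos n, hpbound n]
      _ = C' / C * (C * g n ^ 4 / ‖p n‖ ^ 2) := by field_simp
  refine liminf_eq_zero_of_frequently_lt (fun n => norm_nonneg _) fun ε hε => ?_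
  exact (frequently_lt_of_summable_div_natCast_add_one hweighted (pow_pos hε 4)).mono
    fun n hn => lt_of_pow_lt_pow_left₀ 4 hε.le hn

theorem stmt7 (d : ℕ) (E : EuclideanSpace ℝ (Fin d) → ℝ)
    (C C' : ℝ) (hC : 0 < C) (hC' : 0 < C')
    (hE : ContDiff ℝ 1 E)
    (hbdd : BddBelow (Set.range E))
    (x p : ℕ → EuclideanSpace ℝ (Fin d))
    (hp : ∀ n, p n ≠ 0)
    (hdec : ∀ n, E (x (n + 1)) ≤ E (x n) - C * ‖gradient E (x n)‖ ^ 4 / ‖p n‖ ^ 2)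
    (hpbound : ∀ n, ‖p n‖ ^ 2 ≤ C' * (n + 1)) :
    Filter.liminf (fun n => ‖gradient E (x n)‖) Filter.atTop = 0 :=
  stmt7_general d E C C' hC hC' hbdd x p hp hdec hpbound
end

section
/- Mass conservation under the semi-implicit scheme: if the initial coefficient vector satisfies ⟨e₀, φ⁰⟩ = 0 and at each step the projected gradient satisfies ⟨e₀, ∇F(ψⁿ)⟩ = 0 (enforced via the Lagrange multiplier γ_n = (∇F(ψⁿ))₀), then every iterate φⁿ⁺¹ = (α_n D + I)^{-1}(ψⁿ - α_n(∇F(ψⁿ) - γ_n e₀)) with ψⁿ = φⁿ + w_n(φⁿ - φⁿ⁻¹) satisfies ⟨e₀, φⁿ⟩ = 0 for all n, provided D e₀ = d₀ e₀ with d₀ arbitrary and e₀ a standard basis vector. -/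
open RealInnerProductSpace

theorem stmt18 (d : ℕ)
    (gF : EuclideanSpace ℝ (Fin (d + 1)) → EuclideanSpace ℝ (Fin (d + 1)))
    (dvec : Fin (d + 1) → ℝ) (α w : ℕ → ℝ) (hα : ∀ n, 0 < α n)
    (φ ψ : ℕ → EuclideanSpace ℝ (Fin (d + 1)))
    (e₀ : EuclideanSpace ℝ (Fin (d + 1))) (he₀ : e₀ = EuclideanSpace.single 0 1)
    (γ : ℕ → ℝ) (hγ : ∀ n, γ n = ⟪e₀, gF (ψ n)⟫)
    (hinit : ⟪e₀, φ 0⟫ = 0) (hφ1 : φ 1 = φ 0)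
    (hψ : ∀ n, 1 ≤ n → ψ n = φ n + w n • (φ n - φ (n - 1)))
    (hiter : ∀ n, 1 ≤ n → ∀ i,
      φ (n + 1) i = (ψ n i - α n * (gF (ψ n) i - γ n * e₀ i)) / (α n * dvec i + 1)) :
    ∀ n, ⟪e₀, φ n⟫ = 0 := by
  have key : ∀ x : EuclideanSpace ℝ (Fin (d + 1)), ⟪e₀, x⟫ = x 0 := by
    intro x
    simp [he₀, EuclideanSpace.inner_single_left]
  have h0 : φ 0 0 = 0 := by rw [← key (φ 0)]; exact hinit
  have main : ∀ n, φ n 0 = 0 := by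
    intro n
    induction n using Nat.strong_induction_on with
    | _ n ih =>
      match n with
      | 0 => exact h0
      | 1 => rw [hφ1]; exact h0
      | (m + 2) =>
        have hm1 : 1 ≤ m + 1 := by omega
        have hψ0 : ψ (m + 1) 0 = 0 := by
          rw [hψ (m + 1) hm1]
          have h1 : φ (m + 1) 0 = 0 := ih (m + 1) (by omega)
          have h2 : φ (m + 1 - 1) 0 = 0 := ih m (by omega)
          simp only [Nat.add_sub_cancel] at h2 ⊢
          simp [h1, h2]
        have := hiter (m + 1) hm1 0
        rw [this, hψ0, hγ (m + 1), key, he₀]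
        simp
  intro n
  rw [key]
  exact main n
end
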